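/- arXiv:0910.3821 — 5 statements merged into one kernel-verified Lean document; each statement's English description precedes it below -/
import Mathlib

section
/- Consider the linear network with J resources {1,...,J} and routes {0,1,...,J}, where route 0 uses all resources and route i uses only resource i, capacities C_j = 1, and loads satisfying ρ_0 + ρ_j < 1 for all j. Then π(n_0,...,n_J) = [∏_{j=1}^J (1-ρ_0-ρ_j)/(1-ρ_0)^{J-1}] · C(n_0+...+n_J, n_0) · ∏_{i=0}^J ρ_i^{n_i} (where C(·,·) is the binomial coefficient) is a probability distribution on ℤ_+^{J+1}, i.e., Σ over all (n_0,...,n_J) ∈ ℤ_+^{J+1} of π equals 1. -/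
/-!
Split `n = (n₀, m)` with `m` the coordinates of the single-resource routes. For fixed `m`, the sum
over `n₀` is the negative binomial series `∑ C(n₀ + |m|, |m|) ρ₀^n₀ = (1 - ρ₀)^-(|m|+1)`, and what
remains is a product of `J` geometric series with ratios `ρⱼ / (1 - ρ₀) < 1`, summing to
`∏ (1 - ρ₀) / (1 - ρ₀ - ρⱼ)`. All terms are nonnegative, so the iterated sum is the sum over
`ℕ^(J+1)`, and the normalising constant is exactly its inverse.
-/

open Finset

theorem hasSum_pi_fin_prod_of_nonneg {β : Type*} {J : ℕ} {f : Fin J → β → ℝ} {a : Fin J → ℝ}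
    (hf : ∀ j, 0 ≤ f j) (ha : ∀ j, HasSum (f j) (a j)) :
    HasSum (fun m : Fin J → β => ∏ j, f j (m j)) (∏ j, a j) := by
  induction J with
  | zero => simp
  | succ J ih =>
    have htail := ih (fun j => hf j.succ) (fun j => ha j.succ)
    have htail_nonneg : 0 ≤ fun m : Fin J → β => ∏ j : Fin J, f j.succ (m j) := fun m =>
      prod_nonneg fun j _ => hf j.succ (m j)
    have hsum := (ha 0).summable.mul_of_nonneg htail.summable (hf 0) htail_nonneg
    have hprod := (ha 0).mul htail hsum
    rw [Fin.prod_univ_succ, ← (Fin.consEquiv fun _ => β).hasSum_iff]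
    refine hprod.congr_fun fun p => ?_
    simp only [Function.comp_apply, Fin.consEquiv, Equiv.coe_fn_mk, Fin.prod_univ_succ,
      Fin.cons_zero, Fin.cons_succ]

theorem hasSum_prod_of_nonneg {α β : Type*} {f : α × β → ℝ} {g : α → ℝ} {s : ℝ} (hf : 0 ≤ f)
    (hfib : ∀ a, HasSum (fun b => f (a, b)) (g a)) (hg : HasSum g s) : HasSum f s := by
  have hsum : Summable f :=
    (summable_prod_of_nonneg hf).2 ⟨fun a => (hfib a).summable, by
      simpa only [(hfib _).tsum_eq] using hg.summable⟩
  exact hg.unique (hsum.hasSum.prod_fiberwise hfib) ▸ hsum.hasSum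

noncomputable def linearNetworkWeight {J : ℕ} (ρ : Fin (J + 1) → ℝ) (n : Fin (J + 1) → ℕ) : ℝ :=
  (Nat.choose (∑ i, n i) (n 0) : ℝ) * ∏ i, ρ i ^ n i

section LinearNetwork

variable {J : ℕ} {ρ : Fin (J + 1) → ℝ}

theorem linearNetworkWeight_cons (k : ℕ) (m : Fin J → ℕ) :
    linearNetworkWeight ρ (Fin.cons k m) =
      (∏ j, ρ j.succ ^ m j) * ((k + ∑ j, m j).choose (∑ j, m j) * ρ 0 ^ k) := by
  rw [linearNetworkWeight, Fin.sum_univ_succ, Fin.prod_univ_succ, Nat.choose_symm_add]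
  simp only [Fin.cons_zero, Fin.cons_succ]
  ring

theorem hasSum_linearNetworkWeight_cons (hρ0 : 0 ≤ ρ 0) (hρ0_lt : ρ 0 < 1) (m : Fin J → ℕ) :
    HasSum (fun k => linearNetworkWeight ρ (Fin.cons k m))
      ((1 - ρ 0)⁻¹ * ∏ j, (ρ j.succ / (1 - ρ 0)) ^ m j) := by
  have hnorm : ‖ρ 0‖ < 1 := by rwa [Real.norm_of_nonneg hρ0]
  have hvalue : (∏ j, ρ j.succ ^ m j) * (1 / (1 - ρ 0) ^ (∑ j, m j + 1)) =
      (1 - ρ 0)⁻¹ * ∏ j, (ρ j.succ / (1 - ρ 0)) ^ m j := by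
    rw [prod_congr rfl fun j _ => div_pow (ρ j.succ) (1 - ρ 0) (m j), prod_div_distrib,
      prod_pow_eq_pow_sum, pow_succ]
    field_simp
  simp only [linearNetworkWeight_cons, ← hvalue]
  exact (hasSum_choose_mul_geometric_of_norm_lt_one (∑ j, m j) hnorm).mul_left _

theorem hasSum_linearNetworkWeight (hρ_nonneg : ∀ i, 0 ≤ ρ i) (hρ0_lt : ρ 0 < 1)
    (hρ : ∀ j : Fin J, ρ 0 + ρ j.succ < 1) :
    HasSum (linearNetworkWeight ρ)
      ((1 - ρ 0)⁻¹ * ∏ j : Fin J, (1 - ρ 0) / (1 - ρ 0 - ρ j.succ)) := by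
  have hr : 0 < 1 - ρ 0 := sub_pos.2 hρ0_lt
  have hgeom : ∀ j : Fin J, HasSum (fun k => (ρ j.succ / (1 - ρ 0)) ^ k)
      ((1 - ρ 0) / (1 - ρ 0 - ρ j.succ)) := fun j => by
    have hq : ρ j.succ / (1 - ρ 0) < 1 := by rw [div_lt_one hr]; linarith [hρ j]
    convert hasSum_geometric_of_lt_one (div_nonneg (hρ_nonneg _) hr.le) hq using 1
    field_simp
  have hcols := (hasSum_pi_fin_prod_of_nonneg
    (fun j k => pow_nonneg (div_nonneg (hρ_nonneg j.succ) hr.le) k) hgeom).mul_left (1 - ρ 0)⁻¹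
  have hnonneg : 0 ≤ linearNetworkWeight ρ := fun n =>
    mul_nonneg (Nat.cast_nonneg _) (prod_nonneg fun i _ => pow_nonneg (hρ_nonneg i) _)
  rw [← ((Equiv.prodComm _ _).trans (Fin.consEquiv fun _ => ℕ)).hasSum_iff]
  exact hasSum_prod_of_nonneg (fun p => hnonneg _)
    (hasSum_linearNetworkWeight_cons (hρ_nonneg 0) hρ0_lt) hcols

end LinearNetwork

/-- For the linear network (route `0` through all `J` resources, route `i` through
resource `i` only, unit capacities, `ρ_0 + ρ_j < 1`), the Massoulié–Roberts formula
`π(n) = [∏_j (1-ρ_0-ρ_j)/(1-ρ_0)^{J-1}] C(Σ n_i, n_0) ∏ ρ_i^{n_i}` defines a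
probability distribution on `ℤ_+^{J+1}`. -/
theorem stmt11 {J : ℕ} (hJ : 1 ≤ J)
    (ρ : Fin (J + 1) → ℝ) (hρpos : ∀ i, 0 < ρ i)
    (hρ : ∀ j : Fin J, ρ 0 + ρ j.succ < 1)
    (π : (Fin (J + 1) → ℕ) → ℝ)
    (hπ : ∀ n, π n = (∏ j : Fin J, (1 - ρ 0 - ρ j.succ)) / (1 - ρ 0) ^ (J - 1)
        * (Nat.choose (∑ i, n i) (n 0) : ℝ) * ∏ i, ρ i ^ n i) :
    ∑' n : Fin (J + 1) → ℕ, π n = 1 := by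
  have hρ0 : ρ 0 < 1 := by linarith [hρ ⟨0, hJ⟩, hρpos (Fin.succ ⟨0, hJ⟩)]
  have hr : 1 - ρ 0 ≠ 0 := (sub_pos.2 hρ0).ne'
  have hgaps : ∏ j : Fin J, (1 - ρ 0 - ρ j.succ) ≠ 0 :=
    (prod_pos fun j _ => by linarith [hρ j]).ne'
  have hπ_eq : π = fun n => (∏ j : Fin J, (1 - ρ 0 - ρ j.succ)) / (1 - ρ 0) ^ (J - 1) *
      linearNetworkWeight ρ n := funext fun n => by rw [hπ, linearNetworkWeight, mul_assoc]
  rw [hπ_eq, ((hasSum_linearNetworkWeight (fun i => (hρpos i).le) hρ0 hρ).mul_left _).tsum_eq,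
    prod_div_distrib, prod_const, card_univ, Fintype.card_fin,
    ← pow_sub_one_mul (Nat.one_le_iff_ne_zero.1 hJ)]
  field_simp
end

section
/- With π as above, the marginal distribution of (n_1,...,n_J) obtained by summing π(n_0, n_1, ..., n_J) over n_0 ∈ ℤ_+ equals ∏_{i=1}^J [(1-ρ_0-ρ_i)/(1-ρ_0)] · (ρ_i/(1-ρ_0))^{n_i}; in particular the marginals are independent geometric distributions with success parameter (1-ρ_0-ρ_i)/(1-ρ_0), and the mean of n_i under the marginal is ρ_i/(1-ρ_0-ρ_i). -/
/-- Summing `π` over `n_0` yields independent geometric marginals for `(n_1,…,n_J)` with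
success parameter `(1-ρ_0-ρ_i)/(1-ρ_0)`, and the mean of `n_i` under its marginal is
`ρ_i/(1-ρ_0-ρ_i)`. -/
theorem stmt12 {J : ℕ} (hJ : 1 ≤ J)
    (ρ : Fin (J + 1) → ℝ) (hρpos : ∀ i, 0 < ρ i)
    (hρ : ∀ j : Fin J, ρ 0 + ρ j.succ < 1)
    (π : (Fin (J + 1) → ℕ) → ℝ)
    (hπ : ∀ n, π n = (∏ j : Fin J, (1 - ρ 0 - ρ j.succ)) / (1 - ρ 0) ^ (J - 1)
        * (Nat.choose (∑ i, n i) (n 0) : ℝ) * ∏ i, ρ i ^ n i) :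
    (∀ m : Fin J → ℕ, ∑' n₀ : ℕ, π (Fin.cons n₀ m) =
        ∏ i : Fin J, ((1 - ρ 0 - ρ i.succ) / (1 - ρ 0)) * (ρ i.succ / (1 - ρ 0)) ^ m i) ∧
    (∀ i : Fin J, ∑' k : ℕ,
        (k : ℝ) * (((1 - ρ 0 - ρ i.succ) / (1 - ρ 0)) * (ρ i.succ / (1 - ρ 0)) ^ k) =
        ρ i.succ / (1 - ρ 0 - ρ i.succ)) := by
  have j0 : Fin J := ⟨0, hJ⟩
  have hρ0lt : ρ 0 < 1 := lt_of_le_of_lt (le_add_of_nonneg_right (hρpos j0.succ).le) (hρ j0)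
  have hρ0pos : (0:ℝ) < 1 - ρ 0 := by linarith
  have hρ0ne : (1:ℝ) - ρ 0 ≠ 0 := ne_of_gt hρ0pos
  have hnorm : ‖ρ 0‖ < 1 := by
    rw [Real.norm_eq_abs, abs_of_pos (hρpos 0)]; exact hρ0lt
  constructor
  · intro m
    set S := ∑ j, m j with hS
    set A := ∏ j : Fin J, (1 - ρ 0 - ρ j.succ) with hA
    set P := ∏ j : Fin J, ρ j.succ ^ m j with hP
    have hterm : ∀ n₀ : ℕ, π (Fin.cons n₀ m) =
        A / (1 - ρ 0) ^ (J - 1) * P * (((n₀ + S).choose S : ℝ) * ρ 0 ^ n₀) := by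
      intro n₀
      rw [hπ]
      have h1 : ∑ i, (Fin.cons n₀ m : Fin (J+1) → ℕ) i = n₀ + S := by
        rw [Fin.sum_cons]
      have h2 : (Fin.cons n₀ m : Fin (J+1) → ℕ) 0 = n₀ := rfl
      have h3 : ∏ i, ρ i ^ (Fin.cons n₀ m : Fin (J+1) → ℕ) i = ρ 0 ^ n₀ * P := by
        rw [Fin.prod_univ_succ]; simp [hP]
      rw [h1, h2, h3, Nat.choose_symm_add]
      ring
    rw [tsum_congr hterm, tsum_mul_left,
      tsum_choose_mul_geometric_of_norm_lt_one S hnorm]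
    have hright : ∀ i : Fin J, (1 - ρ 0 - ρ i.succ) / (1 - ρ 0) * (ρ i.succ / (1 - ρ 0)) ^ m i
        = (1 - ρ 0 - ρ i.succ) * ρ i.succ ^ m i * ((1 - ρ 0)⁻¹) ^ (m i + 1) := by
      intro i
      rw [div_pow, div_eq_mul_inv, div_eq_mul_inv, pow_succ, inv_pow]
      ring
    rw [Finset.prod_congr rfl (fun i _ => hright i), Finset.prod_mul_distrib,
      Finset.prod_mul_distrib, Finset.prod_pow_eq_pow_sum]
    have hsum : ∑ i : Fin J, (m i + 1) = S + J := by
      rw [Finset.sum_add_distrib]; simp [hS]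
    rw [hsum, ← hA, ← hP]
    have hJS : (J - 1) + (S + 1) = S + J := by omega
    rw [← hJS, pow_add, div_eq_mul_inv, one_div, mul_inv, ← inv_pow, ← inv_pow]
    ring
  · intro i
    have hlt : ρ i.succ < 1 - ρ 0 := by have := hρ i; linarith
    set x := ρ i.succ / (1 - ρ 0) with hx
    have hxpos : 0 < x := div_pos (hρpos i.succ) hρ0pos
    have hxlt : x < 1 := (div_lt_one hρ0pos).2 hlt
    have hxnorm : ‖x‖ < 1 := by rw [Real.norm_eq_abs, abs_of_pos hxpos]; exact hxlt
    have hterm : ∀ k : ℕ, (k : ℝ) * ((1 - ρ 0 - ρ i.succ) / (1 - ρ 0) * x ^ k)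
        = (1 - ρ 0 - ρ i.succ) / (1 - ρ 0) * ((k : ℝ) * x ^ k) := by intro k; ring
    rw [tsum_congr hterm, tsum_mul_left, tsum_coe_mul_geometric_of_norm_lt_one hxnorm]
    have hne : (1:ℝ) - ρ 0 - ρ i.succ ≠ 0 := by linarith
    have h1x : 1 - x = (1 - ρ 0 - ρ i.succ) / (1 - ρ 0) := by
      rw [hx]; field_simp
    rw [h1x, hx]
    field_simp
end

section
/- For the two-resource, three-route linear network with α = 1 (routes {1}, {2}, {1,2}), the workload cone W₁ = {ABAᵀq : q ∈ ℝ_+²} with B = diag(ν_i/(μ_i²κ_i)) equals the wedge {(w_1,w_2) ∈ ℝ_+² : w_1/β_2 ≤ w_2 ≤ β_1 w_1}, where β_1 = 1 + ν_2μ_3²κ_3/(ν_3μ_2²κ_2) and β_2 = 1 + ν_1μ_3²κ_3/(ν_3μ_1²κ_1). -/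
/-- For the two-resource three-route linear network with `α = 1`, the workload cone
`W₁ = {ABAᵀq : q ∈ ℝ_+²}` with `B = diag(ν_i/(μ_i²κ_i))` equals the wedge
`{w ∈ ℝ_+² : w₁/β₂ ≤ w₂ ≤ β₁ w₁}` with
`β₁ = 1 + ν₂μ₃²κ₃/(ν₃μ₂²κ₂)`, `β₂ = 1 + ν₁μ₃²κ₃/(ν₃μ₁²κ₁)`.
(Routes indexed `0,1,2`: route `2` uses both resources.) -/
theorem stmt13
    (ν μ κ : Fin 3 → ℝ) (hν : ∀ i, 0 < ν i) (hμ : ∀ i, 0 < μ i) (hκ : ∀ i, 0 < κ i)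
    (b : Fin 3 → ℝ) (hb : ∀ i, b i = ν i / (μ i ^ 2 * κ i))
    (β₁ β₂ : ℝ)
    (hβ₁ : β₁ = 1 + ν 1 * μ 2 ^ 2 * κ 2 / (ν 2 * μ 1 ^ 2 * κ 1))
    (hβ₂ : β₂ = 1 + ν 0 * μ 2 ^ 2 * κ 2 / (ν 2 * μ 0 ^ 2 * κ 0)) :
    {w : Fin 2 → ℝ | ∃ q : Fin 2 → ℝ, 0 ≤ q 0 ∧ 0 ≤ q 1 ∧
        w 0 = (b 0 + b 2) * q 0 + b 2 * q 1 ∧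
        w 1 = b 2 * q 0 + (b 1 + b 2) * q 1} =
      {w : Fin 2 → ℝ | 0 ≤ w 0 ∧ 0 ≤ w 1 ∧ w 0 / β₂ ≤ w 1 ∧ w 1 ≤ β₁ * w 0} := by
  have hbpos : ∀ i, 0 < b i := fun i => by
    rw [hb]; exact div_pos (hν i) (mul_pos (pow_pos (hμ i) 2) (hκ i))
  have hb0 := hbpos 0
  have hb1 := hbpos 1
  have hb2 := hbpos 2
  have hB1 : β₁ * b 2 = b 1 + b 2 := by
    have h1 := (hν 2).ne'
    have h2 := (hμ 1).ne'
    have h3 := (hκ 1).ne'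
    have h4 := (hμ 2).ne'
    have h5 := (hκ 2).ne'
    rw [hβ₁, hb 1, hb 2]
    field_simp
    ring
  have hB2 : β₂ * b 2 = b 0 + b 2 := by
    have h1 := (hν 2).ne'
    have h2 := (hμ 0).ne'
    have h3 := (hκ 0).ne'
    have h4 := (hμ 2).ne'
    have h5 := (hκ 2).ne'
    rw [hβ₂, hb 0, hb 2]
    field_simp
    ring
  have hβ2pos : 0 < β₂ := by nlinarith
  have hβ2one : 1 ≤ β₂ := by nlinarith
  have hβ1one : 1 ≤ β₁ := by nlinarith
  have hD : 0 < b 0 * b 1 + b 0 * b 2 + b 1 * b 2 := by positivity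
  ext w
  simp only [Set.mem_setOf_eq]
  constructor
  · rintro ⟨q, hq0, hq1, hw0, hw1⟩
    refine ⟨by nlinarith, by nlinarith, ?_, by
      nlinarith [mul_nonneg (sub_nonneg.mpr hβ1one) (mul_nonneg hb2.le hq0),
        mul_nonneg (mul_nonneg (le_trans zero_le_one hβ1one) hb0.le) hq0]⟩
    rw [div_le_iff₀ hβ2pos]
    nlinarith [mul_nonneg (sub_nonneg.mpr hβ2one) (mul_nonneg hb1.le hq1),
      mul_nonneg (sub_nonneg.mpr hβ2one) (mul_nonneg hb2.le hq1)]
  · rintro ⟨h0, h1, h2, h3⟩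
    rw [div_le_iff₀ hβ2pos] at h2
    set D := b 0 * b 1 + b 0 * b 2 + b 1 * b 2 with hDdef
    refine ⟨![((b 1 + b 2) * w 0 - b 2 * w 1) / D,
              ((b 0 + b 2) * w 1 - b 2 * w 0) / D], ?_, ?_, ?_, ?_⟩
    · simp only [Matrix.cons_val_zero]
      apply div_nonneg _ hD.le
      nlinarith
    · simp only [Matrix.cons_val_one, Matrix.head_cons]
      apply div_nonneg _ hD.le
      nlinarith
    · simp only [Matrix.cons_val_zero, Matrix.cons_val_one, Matrix.head_cons]
      field_simp
      ring
    · simp only [Matrix.cons_val_zero, Matrix.cons_val_one, Matrix.head_cons]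
      field_simp
      ring
end

section
/- Suppose the weighted α-fair allocation Λ satisfies Λ_i(n) = ρ_i for all i with n_i > 0 (condition (ii) of Theorem 4.1), where Aρ = C. Then there exists q ∈ ℝ_+^J such that n_i = ρ_i((qᵀA)_i/κ_i)^{1/α} for all i ∈ I. Conversely, if n admits such a representation with q ∈ ℝ_+^J and complementary slackness q_j(C_j - (AΛ(n))_j) = 0, then Λ_i(n) = ρ_i for all i with n_i > 0. -/
/-!
`Λ(n) = ρ` on the support of `n` exactly when the Karush–Kuhn–Tucker conditions of the concave
program defining `Λ(n)` hold at `ρ`: the gradient `κ_i n_i^α ρ_i^{-α}` of `G_n` equals `(qᵀA)_i`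
for some `q ≥ 0`, which is the representation `n_i = ρ_i ((qᵀA)_i / κ_i)^{1/α}`.

For necessity, heavy traffic `Aρ = C` forces every capacity saturated by the allocation to serve
only routes with `n_i > 0`, so each direction that keeps the saturated capacities within bounds
can be restricted to the support of `n`; first-order optimality and Farkas' lemma (the cone of rows
is closed because `A` has full row rank) then produce `q`. For sufficiency, concavity bounds
`G_n(Λ(n)) - G_n(ρ)` by the gradient paired with `Λ(n) - ρ`, which vanishes by complementary
slackness and `Aρ = C`; uniqueness of the maximizer gives `Λ(n) = ρ`.
-/

open Matrix Filter Topology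

section LinearAlgebra

variable {m ι : Type*} [Fintype m] [Fintype ι]

theorem Matrix.vecMul_injective_of_rank_eq_card {A : Matrix m ι ℝ}
    (h : A.rank = Fintype.card m) : Function.Injective (· ᵥ* A) :=
  vecMul_injective_iff.mpr <| linearIndependent_iff_card_eq_finrank_span.mpr <| by
    rw [← h, rank_eq_finrank_span_row]; rfl

theorem dotProduct_indicator_of_eq_zero {s : Set ι} {a : ι → ℝ} (ha : ∀ i ∉ s, a i = 0)
    (d : ι → ℝ) : a ⬝ᵥ s.indicator d = a ⬝ᵥ d :=
  Finset.sum_congr rfl fun i _ => by by_cases hi : i ∈ s <;> simp [hi, ha]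

theorem eq_zero_of_dotProduct_eq_of_le {a x y : ι → ℝ} (ha : 0 ≤ a) (hxy : x ≤ y)
    (h : a ⬝ᵥ x = a ⬝ᵥ y) {i : ι} (hi : x i < y i) : a i = 0 := by
  have hterm := (Finset.sum_eq_sum_iff_of_le fun k _ => mul_le_mul_of_nonneg_left (hxy k) (ha k)).mp
    h i (Finset.mem_univ i)
  by_contra hne
  exact hi.ne (mul_left_cancel₀ hne hterm)

/-- Farkas' lemma, for the cone spanned by the rows of `A` indexed by `S`. -/
theorem Matrix.exists_nonneg_vecMul_eq_of_dotProduct_nonpos {A : Matrix m ι ℝ}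
    (hA : Function.Injective (· ᵥ* A)) (S : Set m) {g : ι → ℝ}
    (hg : ∀ d, (∀ j ∈ S, (A *ᵥ d) j ≤ 0) → g ⬝ᵥ d ≤ 0) :
    ∃ q, 0 ≤ q ∧ (∀ j ∉ S, q j = 0) ∧ q ᵥ* A = g := by
  classical
  let W : Submodule ℝ (m → ℝ) := Submodule.pi Sᶜ fun _ => ⊥
  let Q : Set (m → ℝ) := Set.Ici 0 ∩ W
  have hW : ∀ q, q ∈ W ↔ ∀ j ∉ S, q j = 0 := fun q => Submodule.mem_pi
  suffices g ∈ A.vecMulLinear '' Q by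
    obtain ⟨q, ⟨hq, hqW⟩, rfl⟩ := this
    exact ⟨q, hq, (hW q).mp hqW, rfl⟩
  by_contra hgK
  have hKclosed : IsClosed (A.vecMulLinear '' Q) :=
    (LinearMap.isClosedEmbedding_of_injective (LinearMap.ker_eq_bot.mpr hA)).isClosedMap _
      (isClosed_Ici.inter W.closed_of_finiteDimensional)
  obtain ⟨f, u, hfK, hfg⟩ := geometric_hahn_banach_closed_point
    (((convex_Ici 0).inter W.convex).linear_image _) hKclosed hgK
  have hu : 0 < u := by simpa using hfK 0 ⟨0, ⟨Set.mem_Ici.mpr le_rfl, W.zero_mem⟩, map_zero _⟩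
  -- `Q` is a cone, so the bound `u` on its image improves to `0`.
  have hfQ : ∀ q ∈ Q, f (q ᵥ* A) ≤ 0 := by
    intro q ⟨hq, hqW⟩
    by_contra! hpos
    have hmem : (u / f (q ᵥ* A)) • q ∈ Q :=
      ⟨Set.mem_Ici.mpr (smul_nonneg (div_pos hu hpos).le hq), W.smul_mem _ hqW⟩
    have := hfK _ ⟨_, hmem, rfl⟩
    rw [vecMulLinear_apply, smul_vecMul, map_smul, smul_eq_mul, div_mul_cancel₀ _ hpos.ne'] at this
    exact lt_irrefl u this
  let d : ι → ℝ := fun i => f fun k => if i = k then 1 else 0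
  have hfd : ∀ v, f v = v ⬝ᵥ d := fun v => by
    rw [← ContinuousLinearMap.coe_coe, LinearMap.pi_apply_eq_sum_univ]; rfl
  refine (hu.trans hfg).not_ge ((hfd g).trans_le (hg d fun j hj => ?_))
  have hrow : Pi.single j 1 ∈ Q :=
    ⟨Pi.single_nonneg.mpr zero_le_one,
      (hW _).mpr fun k hk => Pi.single_eq_of_ne (ne_of_mem_of_not_mem hj hk).symm _⟩
  have := hfQ _ hrow
  rwa [hfd, single_one_vecMul] at this

end LinearAlgebra

theorem rpow_sub_one_div_le_sub_one {p s : ℝ} (hp0 : p ≠ 0) (hp1 : p < 1) (hs : 0 < s) :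
    (s ^ p - 1) / p ≤ s - 1 := by
  rcases hp0.lt_or_gt with hp | hp
  · rw [div_le_iff_of_neg hp]
    have := Real.add_one_le_exp (Real.log s * p)
    rw [← Real.rpow_def_of_pos hs] at this
    nlinarith [Real.log_le_sub_one_of_pos hs]
  · rw [div_le_iff₀ hp]
    have := rpow_one_add_le_one_add_mul_self (s := s - 1) (by linarith) hp.le hp1.le
    rw [add_sub_cancel] at this
    linarith

noncomputable def fairUtility (α x : ℝ) : ℝ :=
  if α = 1 then Real.log x else x ^ (1 - α) / (1 - α)

theorem hasDerivAt_fairUtility (α : ℝ) {x : ℝ} (hx : 0 < x) :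
    HasDerivAt (fairUtility α) (x ^ (-α)) x := by
  rcases eq_or_ne α 1 with rfl | hα
  · rw [show fairUtility 1 = Real.log from funext fun _ => if_pos rfl, Real.rpow_neg_one]
    exact Real.hasDerivAt_log hx.ne'
  · have h1α : 1 - α ≠ 0 := sub_ne_zero.mpr hα.symm
    have := (Real.hasDerivAt_rpow_const (p := 1 - α) (Or.inl hx.ne')).div_const (1 - α)
    rw [show fairUtility α = fun x => x ^ (1 - α) / (1 - α) from funext fun _ => if_neg hα]
    refine this.congr_deriv ?_
    rw [mul_div_cancel_left₀ _ h1α, sub_sub_cancel_left]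

theorem fairUtility_sub_le {α y z : ℝ} (hα : 0 < α) (hy : 0 < y) (hz : 0 < z) :
    fairUtility α z - fairUtility α y ≤ y ^ (-α) * (z - y) := by
  rcases eq_or_ne α 1 with rfl | hα1
  · simp only [fairUtility, if_true, Real.rpow_neg_one]
    rw [← Real.log_div hz.ne' hy.ne']
    calc Real.log (z / y) ≤ z / y - 1 := Real.log_le_sub_one_of_pos (div_pos hz hy)
      _ = y⁻¹ * (z - y) := by field_simp
  · simp only [fairUtility, hα1, if_false]
    have hp0 : 1 - α ≠ 0 := sub_ne_zero.mpr hα1.symm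
    have hb := rpow_sub_one_div_le_sub_one hp0 (by linarith) (div_pos hz hy)
    have hyp : 0 < y ^ (1 - α) := Real.rpow_pos_of_pos hy _
    rw [Real.div_rpow hz.le hy.le] at hb
    have hyα : y ^ (-α) = y ^ (1 - α) / y := by
      rw [← Real.rpow_sub_one hy.ne']; ring_nf
    calc z ^ (1 - α) / (1 - α) - y ^ (1 - α) / (1 - α)
        = y ^ (1 - α) * ((z ^ (1 - α) / y ^ (1 - α) - 1) / (1 - α)) := by field_simp
      _ ≤ y ^ (1 - α) * (z / y - 1) := mul_le_mul_of_nonneg_left hb hyp.le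
      _ = y ^ (-α) * (z - y) := by rw [hyα]; field_simp

section Objective

variable {ι : Type*} (α : ℝ) (κ n : ι → ℝ)

noncomputable def fairGradient (x : ι → ℝ) (i : ι) : ℝ :=
  if 0 < n i then κ i * n i ^ α * x i ^ (-α) else 0

/-- The objective `G_n` of the program defining `Λ(n)`. -/
noncomputable def fairObjective [Fintype ι] (x : ι → ℝ) : ℝ :=
  ∑ i, if 0 < n i then κ i * n i ^ α * fairUtility α (x i) else 0

variable {α κ n}

theorem fairGradient_indicator (x : ι → ℝ) :
    fairGradient α κ n ({i | 0 < n i}.indicator x) = fairGradient α κ n x := by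
  ext i
  by_cases hi : 0 < n i <;> simp [fairGradient, hi]

variable [Fintype ι]

theorem fairObjective_eq_ite (x : ι → ℝ) :
    fairObjective α κ n x =
      if α = 1 then ∑ i, (if 0 < n i then κ i * n i * Real.log (x i) else 0)
      else ∑ i, (if 0 < n i then κ i * n i ^ α * x i ^ (1 - α) / (1 - α) else 0) := by
  split_ifs with hα
  · subst hα; simp [fairObjective, fairUtility]
  · simp [fairObjective, fairUtility, hα, mul_div_assoc]

theorem hasFDerivAt_fairObjective {x : ι → ℝ} (hx : ∀ i, 0 < n i → 0 < x i) :
    HasFDerivAt (fairObjective α κ n)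
      (∑ i, fairGradient α κ n x i • ContinuousLinearMap.proj (R := ℝ) (φ := fun _ : ι => ℝ) i)
      x := by
  refine HasFDerivAt.fun_sum fun i _ => ?_
  by_cases hi : 0 < n i
  · simp only [fairGradient, hi, if_true]
    rw [mul_smul]
    exact ((hasDerivAt_fairUtility α (hx i hi)).comp_hasFDerivAt x
      (hasFDerivAt_apply (𝕜 := ℝ) (F' := fun _ : ι => ℝ) i x)).const_mul (κ i * n i ^ α)
  · simp only [fairGradient, hi, if_false, zero_smul]
    exact hasFDerivAt_const 0 x

theorem fairObjective_sub_le (hα : 0 < α) (hκ : ∀ i, 0 ≤ κ i) {x y : ι → ℝ}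
    (hx : ∀ i, 0 < n i → 0 < x i) (hy : ∀ i, 0 < n i → 0 < y i) :
    fairObjective α κ n y - fairObjective α κ n x ≤ fairGradient α κ n x ⬝ᵥ (y - x) := by
  rw [fairObjective, fairObjective, ← Finset.sum_sub_distrib]
  refine Finset.sum_le_sum fun i _ => ?_
  by_cases hi : 0 < n i
  · simp only [fairGradient, hi, if_true, Pi.sub_apply]
    rw [← mul_sub, mul_assoc (κ i * n i ^ α)]
    exact mul_le_mul_of_nonneg_left (fairUtility_sub_le hα (hx i hi) (hy i hi))
      (mul_nonneg (hκ i) (Real.rpow_nonneg hi.le α))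
  · simp [fairGradient, hi]

end Objective

theorem eq_mul_rpow_one_div_iff {α κ ρ ν w : ℝ} (hα : 0 < α) (hκ : 0 < κ) (hρ : 0 < ρ)
    (hν : 0 ≤ ν) (hw : 0 ≤ w) :
    ν = ρ * (w / κ) ^ (1 / α) ↔ w = if 0 < ν then κ * ν ^ α * ρ ^ (-α) else 0 := by
  have hkey : ν = ρ * (w / κ) ^ (1 / α) ↔ w = κ * (ν / ρ) ^ α := by
    rw [one_div, eq_comm, mul_comm, ← eq_div_iff hρ.ne', Real.rpow_inv_eq (div_nonneg hw hκ.le)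
      (div_nonneg hν hρ.le) hα.ne', div_eq_iff hκ.ne', mul_comm _ κ]
  rw [hkey]
  split_ifs with hν0
  · rw [Real.div_rpow hν hρ.le, Real.rpow_neg hρ.le, div_eq_mul_inv, mul_assoc]
  · rw [le_antisymm (not_lt.mp hν0) hν, zero_div, Real.zero_rpow hα.ne', mul_zero]

section Network

variable {ι m : Type*} [Fintype ι] {α : ℝ} {κ n ρ : ι → ℝ}
  {A : Matrix m ι ℝ} {C : m → ℝ}

/-- The feasible set of the program defining `Λ(n)`. -/
def allocationSet (A : Matrix m ι ℝ) (C : m → ℝ) (n : ι → ℝ) : Set (ι → ℝ) :=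
  {x | (∀ i, 0 < n i → 0 < x i) ∧ (∀ i, n i = 0 → x i = 0) ∧ A *ᵥ x ≤ C}

theorem indicator_mem_allocationSet (hA0 : ∀ j i, 0 ≤ A j i) (hρ : ∀ i, 0 < ρ i)
    (hbal : A *ᵥ ρ = C) : {i | 0 < n i}.indicator ρ ∈ allocationSet A C n := by
  refine ⟨fun i hi => by simp [hi, hρ i], fun i hi => by simp [hi], fun j => ?_⟩
  rw [← hbal]
  exact Finset.sum_le_sum fun i _ => mul_le_mul_of_nonneg_left
    (Set.indicator_le_self' (fun i _ => (hρ i).le) i) (hA0 j i)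

theorem eventually_add_smul_mem_allocationSet [Finite m] {x d : ι → ℝ}
    (hx : x ∈ allocationSet A C n) (hd : ∀ i, ¬ 0 < n i → d i = 0) (hdC : ∀ j, (A *ᵥ x) j = C j → (A *ᵥ d) j ≤ 0) :
    ∀ᶠ t in 𝓝[>] (0 : ℝ), x + t • d ∈ allocationSet A C n := by
  obtain ⟨hxpos, hxzero, hxC⟩ := hx
  have hline : ∀ a b : ℝ, Tendsto (fun t => a + t * b) (𝓝[>] 0) (𝓝 a) := fun a b =>
    tendsto_nhdsWithin_of_tendsto_nhds <| Continuous.tendsto' (by fun_prop) 0 a (by simp)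
  have hpos : ∀ᶠ t in 𝓝[>] (0 : ℝ), ∀ i, 0 < n i → 0 < x i + t * d i :=
    eventually_all.mpr fun i => by
      by_cases hi : 0 < n i
      · exact ((hline _ _).eventually_const_lt (hxpos i hi)).mono fun t ht _ => ht
      · exact Eventually.of_forall fun t hi' => absurd hi' hi
  have hcap : ∀ᶠ t in 𝓝[>] (0 : ℝ), ∀ j, (A *ᵥ x) j + t * (A *ᵥ d) j ≤ C j :=
    eventually_all.mpr fun j => by
      rcases (hxC j).eq_or_lt with hj | hj
      · filter_upwards [self_mem_nhdsWithin] with t ht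
        nlinarith [hdC j hj, Set.mem_Ioi.mp ht]
      · exact ((hline _ _).eventually_lt_const hj).mono fun t ht => ht.le
  filter_upwards [hpos, hcap] with t htpos htcap
  refine ⟨htpos, fun i hi => ?_, fun j => ?_⟩
  · simp [hxzero i hi, hd i hi.not_gt]
  · simpa [mulVec_add, mulVec_smul] using htcap j

/-- The Karush–Kuhn–Tucker conditions at the allocation `ρ`, necessary part. -/
theorem exists_nonneg_vecMul_eq_fairGradient [Fintype m] (hA0 : ∀ j i, 0 ≤ A j i)
    (hA : Function.Injective (· ᵥ* A)) (hρ : ∀ i, 0 < ρ i) (hbal : A *ᵥ ρ = C)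
    (hmax : IsMaxOn (fairObjective α κ n) (allocationSet A C n) ({i | 0 < n i}.indicator ρ)) :
    ∃ q, 0 ≤ q ∧ q ᵥ* A = fairGradient α κ n ρ := by
  set x := {i | 0 < n i}.indicator ρ
  have hx : x ∈ allocationSet A C n := indicator_mem_allocationSet hA0 hρ hbal
  have hgrad0 : ∀ i ∉ {i | 0 < n i}, fairGradient α κ n x i = 0 := fun i hi => if_neg hi
  -- Heavy traffic: a capacity that is saturated at `x ≤ ρ` is only used by routes with `n i > 0`.
  have hactive : ∀ j, (A *ᵥ x) j = C j → ∀ i ∉ {i | 0 < n i}, A j i = 0 :=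
    fun j hj i hi => eq_zero_of_dotProduct_eq_of_le (hA0 j)
      (Set.indicator_le_self' fun i _ => (hρ i).le) (hj.trans (congrFun hbal j).symm)
      (by simpa [x, Set.indicator_of_notMem hi] using hρ i)
  obtain ⟨q, hq, -, hqA⟩ := exists_nonneg_vecMul_eq_of_dotProduct_nonpos hA
    {j | (A *ᵥ x) j = C j} (g := fairGradient α κ n x) fun d hd => by
      set d' := {i | 0 < n i}.indicator d
      have hd'C : ∀ j, (A *ᵥ x) j = C j → (A *ᵥ d') j ≤ 0 := fun j hj =>
        (dotProduct_indicator_of_eq_zero (hactive j hj) d).trans_le (hd j hj)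
      have hd' : ∀ i, ¬ 0 < n i → d' i = 0 := fun i hi =>
        Set.indicator_of_notMem (s := {i | 0 < n i}) hi d
      have hmem : d' ∈ posTangentConeAt (allocationSet A C n) x :=
        mem_posTangentConeAt_of_frequently_mem
          (eventually_add_smul_mem_allocationSet hx hd' hd'C).frequently
      have hfirst := hmax.localize.hasFDerivWithinAt_nonpos
        (hasFDerivAt_fairObjective hx.1).hasFDerivWithinAt hmem
      rw [← dotProduct_indicator_of_eq_zero hgrad0 d]
      simpa [dotProduct] using hfirst
  exact ⟨q, hq, hqA.trans (fairGradient_indicator ρ)⟩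

/-- The Karush–Kuhn–Tucker conditions at the allocation `ρ`, sufficient part. -/
theorem fairObjective_le_of_complementary_slackness [Fintype m] (hα : 0 < α) (hκ : ∀ i, 0 ≤ κ i)
    (hρ : ∀ i, 0 < ρ i) (hbal : A *ᵥ ρ = C) {q : m → ℝ} (hgrad : q ᵥ* A = fairGradient α κ n ρ)
    {y : ι → ℝ} (hy : ∀ i, 0 < n i → 0 < y i) (hslack : ∀ j, q j * (C j - (A *ᵥ y) j) = 0) :
    fairObjective α κ n y ≤ fairObjective α κ n ({i | 0 < n i}.indicator ρ) := by
  have hx : ∀ i, 0 < n i → 0 < {i | 0 < n i}.indicator ρ i := fun i hi => by simp [hi, hρ i]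
  have hgx : fairGradient α κ n ρ ⬝ᵥ {i | 0 < n i}.indicator ρ = q ⬝ᵥ C := by
    rw [dotProduct_indicator_of_eq_zero (s := {i | 0 < n i}) (a := fairGradient α κ n ρ)
      (fun i hi => if_neg hi),
      ← hgrad, ← dotProduct_mulVec, hbal]
  have hgy : fairGradient α κ n ρ ⬝ᵥ y = q ⬝ᵥ C := by
    rw [← hgrad, ← dotProduct_mulVec]
    exact Finset.sum_congr rfl fun j _ => by linear_combination -hslack j
  have := fairObjective_sub_le hα hκ hx hy
  rw [fairGradient_indicator, dotProduct_sub, hgx, hgy, sub_self] at this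
  linarith

end Network

theorem stmt14_general {I J : ℕ} (α : ℝ) (hα : 0 < α)
    (κ ρ : Fin I → ℝ) (hκ : ∀ i, 0 < κ i) (hρ : ∀ i, 0 < ρ i)
    (A : Matrix (Fin J) (Fin I) ℝ)
    (hA01 : ∀ j i, A j i = 0 ∨ A j i = 1) (hArank : A.rank = J)
    (C : Fin J → ℝ)
    (hbal : ∀ j, ∑ i, A j i * ρ i = C j)
    (G : (Fin I → ℝ) → (Fin I → ℝ) → ℝ)
    (hG : ∀ n x, G n x =
      if α = 1 then ∑ i, (if 0 < n i then κ i * n i * Real.log (x i) else 0)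
      else ∑ i, (if 0 < n i then κ i * n i ^ α * x i ^ (1 - α) / (1 - α) else 0))
    (Λ : (Fin I → ℝ) → (Fin I → ℝ))
    (hΛ : ∀ n : Fin I → ℝ, (∀ i, 0 ≤ n i) →
      (∀ i, n i = 0 → Λ n i = 0) ∧ (∀ i, 0 < n i → 0 < Λ n i) ∧
      (∀ j, ∑ i, A j i * Λ n i ≤ C j) ∧
      (∀ x : Fin I → ℝ, (∀ i, 0 < n i → 0 < x i) → (∀ i, n i = 0 → x i = 0) →
        (∀ j, ∑ i, A j i * x i ≤ C j) → x ≠ Λ n → G n x < G n (Λ n))) :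
    (∀ n : Fin I → ℝ, (∀ i, 0 ≤ n i) →
        (∀ i, 0 < n i → Λ n i = ρ i) →
        ∃ q : Fin J → ℝ, (∀ j, 0 ≤ q j) ∧
          ∀ i, n i = ρ i * ((∑ j, q j * A j i) / κ i) ^ (1 / α)) ∧
    (∀ n : Fin I → ℝ, (∀ i, 0 ≤ n i) →
        ∀ q : Fin J → ℝ, (∀ j, 0 ≤ q j) →
        (∀ i, n i = ρ i * ((∑ j, q j * A j i) / κ i) ^ (1 / α)) →
        (∀ j, q j * (C j - ∑ i, A j i * Λ n i) = 0) →
        ∀ i, 0 < n i → Λ n i = ρ i) := by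
  obtain rfl : G = fun n => fairObjective α κ n :=
    funext₂ fun n x => by rw [hG, fairObjective_eq_ite]
  have hA0 : ∀ j i, 0 ≤ A j i := fun j i => by rcases hA01 j i with h | h <;> simp [h]
  have hA : Function.Injective (· ᵥ* A) := vecMul_injective_of_rank_eq_card (by simpa using hArank)
  have hqA : ∀ q : Fin J → ℝ, 0 ≤ q → ∀ i, 0 ≤ ∑ j, q j * A j i := fun q hq i =>
    Finset.sum_nonneg fun j _ => mul_nonneg (hq j) (hA0 j i)
  have hbal' : A *ᵥ ρ = C := funext hbal
  constructor
  · intro n hn hinv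
    obtain ⟨h0, -, -, hmax⟩ := hΛ n hn
    have hΛρ : Λ n = {i | 0 < n i}.indicator ρ := funext fun i => by
      by_cases hi : 0 < n i
      · simp [hi, hinv i hi]
      · simp [hi, h0 i (le_antisymm (not_lt.mp hi) (hn i))]
    have hΛmax : IsMaxOn (fairObjective α κ n) (allocationSet A C n) (Λ n) := fun x hx => by
      rcases eq_or_ne x (Λ n) with rfl | hne
      · exact le_refl (fairObjective α κ n (Λ n))
      · exact (hmax x hx.1 hx.2.1 hx.2.2 hne).le
    obtain ⟨q, hq, hqρ⟩ := exists_nonneg_vecMul_eq_fairGradient hA0 hA hρ hbal' (hΛρ ▸ hΛmax)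
    exact ⟨q, hq, fun i => (eq_mul_rpow_one_div_iff hα (hκ i) (hρ i) (hn i)
      (hqA q hq i)).mpr (congrFun hqρ i)⟩
  · intro n hn q hq hrep hslack i hi
    obtain ⟨-, hpos, -, hmax⟩ := hΛ n hn
    have hgrad : q ᵥ* A = fairGradient α κ n ρ := funext fun i =>
      (eq_mul_rpow_one_div_iff hα (hκ i) (hρ i) (hn i) (hqA q hq i)).mp (hrep i)
    have hle := fairObjective_le_of_complementary_slackness hα (fun i => (hκ i).le) hρ hbal'
      hgrad hpos hslack
    obtain ⟨hρpos, hρzero, hρC⟩ := indicator_mem_allocationSet (n := n) hA0 hρ hbal'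
    have hΛρ : {i | 0 < n i}.indicator ρ = Λ n := by
      by_contra hne
      exact (hmax _ hρpos hρzero hρC hne).not_ge hle
    rw [← hΛρ, Set.indicator_of_mem (show i ∈ {i | 0 < n i} from hi)]

/-- Characterization of invariant states: if the weighted α-fair allocation `Λ` (the
unique maximizer of `G_n` subject to the capacity constraints, vanishing on empty
routes and positive on nonempty ones) satisfies `Λ_i(n) = ρ_i` for all `i` with
`n_i > 0`, where `Aρ = C`, then there is `q ∈ ℝ_+^J` with
`n_i = ρ_i ((qᵀA)_i/κ_i)^{1/α}` for all `i`; conversely, if `n` admits such a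
representation with `q ≥ 0` and complementary slackness
`q_j (C_j - (AΛ(n))_j) = 0`, then `Λ_i(n) = ρ_i` for all `i` with `n_i > 0`. -/
theorem stmt14 {I J : ℕ} (α : ℝ) (hα : 0 < α)
    (κ ρ : Fin I → ℝ) (hκ : ∀ i, 0 < κ i) (hρ : ∀ i, 0 < ρ i)
    (A : Matrix (Fin J) (Fin I) ℝ)
    (hA01 : ∀ j i, A j i = 0 ∨ A j i = 1) (hArank : A.rank = J)
    (C : Fin J → ℝ) (hC : ∀ j, 0 < C j)
    (hbal : ∀ j, ∑ i, A j i * ρ i = C j)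
    (G : (Fin I → ℝ) → (Fin I → ℝ) → ℝ)
    (hG : ∀ n x, G n x =
      if α = 1 then ∑ i, (if 0 < n i then κ i * n i * Real.log (x i) else 0)
      else ∑ i, (if 0 < n i then κ i * n i ^ α * x i ^ (1 - α) / (1 - α) else 0))
    (Λ : (Fin I → ℝ) → (Fin I → ℝ))
    (hΛ : ∀ n : Fin I → ℝ, (∀ i, 0 ≤ n i) →
      (∀ i, n i = 0 → Λ n i = 0) ∧ (∀ i, 0 < n i → 0 < Λ n i) ∧
      (∀ j, ∑ i, A j i * Λ n i ≤ C j) ∧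
      (∀ x : Fin I → ℝ, (∀ i, 0 < n i → 0 < x i) → (∀ i, n i = 0 → x i = 0) →
        (∀ j, ∑ i, A j i * x i ≤ C j) → x ≠ Λ n → G n x < G n (Λ n))) :
    (∀ n : Fin I → ℝ, (∀ i, 0 ≤ n i) →
        (∀ i, 0 < n i → Λ n i = ρ i) →
        ∃ q : Fin J → ℝ, (∀ j, 0 ≤ q j) ∧
          ∀ i, n i = ρ i * ((∑ j, q j * A j i) / κ i) ^ (1 / α)) ∧
    (∀ n : Fin I → ℝ, (∀ i, 0 ≤ n i) →
        ∀ q : Fin J → ℝ, (∀ j, 0 ≤ q j) →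
        (∀ i, n i = ρ i * ((∑ j, q j * A j i) / κ i) ^ (1 / α)) →
        (∀ j, q j * (C j - ∑ i, A j i * Λ n i) = 0) →
        ∀ i, 0 < n i → Λ n i = ρ i) :=
  stmt14_general α hα κ ρ hκ hρ A hA01 hArank C hbal G hG Λ hΛ
end

section
/- Let Δ: ℝ_+^J → ℝ_+^I map w to the unique minimizer of the strictly convex coercive function F over the feasible set S(w) = {n ∈ ℝ_+^I : AM^{-1}n ≥ w}. Then Δ is continuous on ℝ_+^J. -/
/-!
The minimizer `Δ w` stays in a fixed compact box for `w` near `w₀`, because a large multiple of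
`μ` is feasible for all such `w` and bounds `F (Δ w)`, and `F` is coercive on the orthant. Any
cluster point `m` of `Δ w` as `w → w₀` is feasible for `w₀` since the constraints are closed, and
`F m ≤ F (Δ w₀)` because `Δ w₀ + (‖w - w₀‖ / r) • μ` is feasible for `w` (with `r` a lower bound
of the row sums of `A`, positive by the rank condition) and tends to `Δ w₀`. Uniqueness of the
minimizer forces `m = Δ w₀`.
-/

open Filter Topology Set

theorem Filter.Tendsto.prodMk_mapClusterPt {α X Y : Type*} [TopologicalSpace X]
    [TopologicalSpace Y] {F : Filter α} {u : α → X} {v : α → Y} {x : X} {y : Y}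
    (hu : Tendsto u F (𝓝 x)) (hv : MapClusterPt y F v) :
    MapClusterPt (x, y) F fun a => (u a, v a) := by
  rw [((𝓝 x).basis_sets.prod_nhds (𝓝 y).basis_sets).mapClusterPt_iff_frequently]
  rintro ⟨U, V⟩ ⟨hU, hV⟩
  exact ((hv.frequently hV).and_eventually (hu hU)).mono fun a h => ⟨h.2, h.1⟩

/-- A form of Berge's maximum theorem. -/
theorem continuousWithinAt_of_unique_isMinOn {W X : Type*} [TopologicalSpace W]
    [TopologicalSpace X] {f : X → ℝ} {S : W → Set X} {s : Set W} {Δ g : W → X} {K : Set X}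
    {w₀ : W} (hf : Continuous f) (hS : IsClosed {p : W × X | p.2 ∈ S p.1})
    (hΔ : ∀ w ∈ s, Δ w ∈ S w ∧ IsMinOn f (S w) (Δ w))
    (huniq : ∀ x ∈ S w₀, f x ≤ f (Δ w₀) → x = Δ w₀)
    (hg : Tendsto g (𝓝[s] w₀) (𝓝 (Δ w₀))) (hgS : ∀ᶠ w in 𝓝[s] w₀, g w ∈ S w)
    (hK : IsCompact K) (hΔK : ∀ᶠ w in 𝓝[s] w₀, Δ w ∈ K) :
    ContinuousWithinAt Δ s w₀ := by
  refine hK.tendsto_nhds_of_unique_mapClusterPt hΔK fun m _ hm => huniq m ?_ ?_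
  · exact hS.mem_of_mapClusterPt
      ((tendsto_nhdsWithin_of_tendsto_nhds tendsto_id).prodMk_mapClusterPt hm)
      (eventually_mem_nhdsWithin.mono fun w hw => (hΔ w hw).1)
  · exact (isClosed_le (hf.comp continuous_snd) (hf.comp continuous_fst)).mem_of_mapClusterPt
      (hg.prodMk_mapClusterPt hm)
      ((hgS.and eventually_mem_nhdsWithin).mono fun w h => (hΔ w h.2).2 h.1)

theorem Matrix.exists_mulVec_eq_of_rank_eq_card {κ ι : Type*} [Fintype κ] [Fintype ι]
    [DecidableEq κ] {A : Matrix κ ι ℝ} (hA : A.rank = Fintype.card κ) (v : κ → ℝ) :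
    ∃ x, A.mulVec x = v := by
  have : LinearMap.range A.mulVecLin = ⊤ :=
    Submodule.eq_top_of_finrank_eq <| by
      rw [← Matrix.rank, hA, Module.finrank_fintype_fun_eq_card]
  exact LinearMap.range_eq_top.1 this v

theorem Matrix.sum_row_pos_of_rank_eq_card {κ ι : Type*} [Fintype κ] [Fintype ι]
    {A : Matrix κ ι ℝ} (hA0 : ∀ j i, 0 ≤ A j i) (hA : A.rank = Fintype.card κ) (j : κ) :
    0 < ∑ i, A j i := by
  classical
  obtain ⟨x, hx⟩ := A.exists_mulVec_eq_of_rank_eq_card hA (Pi.single j 1)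
  refine (Finset.sum_nonneg fun i _ => hA0 j i).lt_of_ne fun h => ?_
  have hrow : ∀ i, A j i = 0 := fun i =>
    (Finset.sum_eq_zero_iff_of_nonneg fun i _ => hA0 j i).1 h.symm i (Finset.mem_univ i)
  simpa [Matrix.mulVec, dotProduct, hrow] using congrFun hx j

theorem exists_pos_forall_le_of_pos {κ : Type*} [Finite κ] {c : κ → ℝ} (hc : ∀ j, 0 < c j) :
    ∃ r > 0, ∀ j, r ≤ c j :=
  ((eventually_mem_nhdsWithin (s := Ioi 0) (a := 0)).and (eventually_all.2 fun j =>
    eventually_nhdsWithin_of_eventually_nhds (eventually_le_nhds (hc j)))).exists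

theorem le_mul_rpow_inv_of_sum_le {ι : Type*} [Fintype ι] {a ν n : ι → ℝ} {p B : ℝ}
    (hp : 0 < p) (ha : ∀ i, 0 < a i) (hν : ∀ i, 0 < ν i) (hn : ∀ i, 0 ≤ n i)
    (h : ∑ i, a i * (n i / ν i) ^ p ≤ B) (i : ι) : n i ≤ ν i * (B / a i) ^ p⁻¹ := by
  have hx : 0 ≤ n i / ν i := div_nonneg (hn i) (hν i).le
  have hi : a i * (n i / ν i) ^ p ≤ B := (Finset.single_le_sum (fun i _ =>
    mul_nonneg (ha i).le (Real.rpow_nonneg (div_nonneg (hn i) (hν i).le) p))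
    (Finset.mem_univ i)).trans h
  have hi' : (n i / ν i) ^ p ≤ B / a i := by rw [le_div_iff₀ (ha i)]; linarith
  have := (Real.le_rpow_inv_iff_of_pos hx ((Real.rpow_nonneg hx p).trans hi') hp).2 hi'
  rwa [div_le_iff₀' (hν i)] at this

theorem exists_isCompact_forall_sum_rpow_le {ι : Type*} [Fintype ι] {a ν : ι → ℝ} {p c : ℝ}
    (hp : 0 < p) (ha : ∀ i, 0 < a i) (hν : ∀ i, 0 < ν i) (hc : 0 < c) (B : ℝ) :
    ∃ K : Set (ι → ℝ), IsCompact K ∧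
      ∀ n, (∀ i, 0 ≤ n i) → c * ∑ i, a i * (n i / ν i) ^ p ≤ B → n ∈ K := by
  refine ⟨univ.pi fun i => Icc 0 (ν i * (B / c / a i) ^ p⁻¹),
    isCompact_univ_pi fun _ => isCompact_Icc,
    fun n hn hB i _ => ⟨hn i, le_mul_rpow_inv_of_sum_le hp ha hν hn ?_ i⟩⟩
  rwa [le_div_iff₀ hc, mul_comm]

section Feasibility

variable {κ ι : Type*} [Fintype ι] {A : Matrix κ ι ℝ} {μ : ι → ℝ}

def feasibleSet (A : Matrix κ ι ℝ) (μ : ι → ℝ) (w : κ → ℝ) : Set (ι → ℝ) :=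
  {n | (∀ i, 0 ≤ n i) ∧ ∀ j, w j ≤ ∑ i, A j i * n i / μ i}

theorem isClosed_setOf_mem_feasibleSet :
    IsClosed {p : (κ → ℝ) × (ι → ℝ) | p.2 ∈ feasibleSet A μ p.1} := by
  have : {p : (κ → ℝ) × (ι → ℝ) | p.2 ∈ feasibleSet A μ p.1} =
      (⋂ i, {p | 0 ≤ p.2 i}) ∩ ⋂ j, {p | p.1 j ≤ ∑ i, A j i * p.2 i / μ i} := by
    ext; simp [feasibleSet]
  rw [this]
  exact (isClosed_iInter fun i => isClosed_le (by fun_prop) (by fun_prop)).inter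
    (isClosed_iInter fun j => isClosed_le (by fun_prop) (by fun_prop))

theorem add_smul_mem_feasibleSet [Fintype κ] (hμ : ∀ i, 0 < μ i) {w₀ w : κ → ℝ} {n : ι → ℝ}
    {t r : ℝ} (hn : n ∈ feasibleSet A μ w₀) (ht : 0 ≤ t) (hrA : ∀ j, r ≤ ∑ i, A j i)
    (hw : ‖w - w₀‖ ≤ t * r) : n + t • μ ∈ feasibleSet A μ w := by
  refine ⟨fun i => add_nonneg (hn.1 i) (mul_nonneg ht (hμ i).le), fun j => ?_⟩
  have hsplit :
      ∑ i, A j i * (n + t • μ) i / μ i = ∑ i, A j i * n i / μ i + t * ∑ i, A j i := by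
    rw [Finset.mul_sum, ← Finset.sum_add_distrib]
    refine Finset.sum_congr rfl fun i _ => ?_
    simp only [Pi.add_apply, Pi.smul_apply, smul_eq_mul]
    field_simp [(hμ i).ne']
  have hwj : w j - w₀ j ≤ t * r :=
    ((le_abs_self _).trans (norm_le_pi_norm (w - w₀) j)).trans hw
  rw [hsplit]
  nlinarith [hn.2 j, hrA j]

theorem eventually_smul_mem_feasibleSet [Fintype κ] (hμ : ∀ i, 0 < μ i) {r : ℝ} (hr : 0 < r)
    (hrA : ∀ j, r ≤ ∑ i, A j i) (w₀ : κ → ℝ) :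
    ∀ᶠ w in 𝓝 w₀, ((‖w₀‖ + 1) / r) • μ ∈ feasibleSet A μ w := by
  have h0 : (0 : ι → ℝ) ∈ feasibleSet A μ 0 := ⟨fun _ => le_rfl, fun _ => by simp⟩
  filter_upwards [Metric.ball_mem_nhds w₀ one_pos] with w hw
  have hw' : ‖w - 0‖ ≤ (‖w₀‖ + 1) / r * r := by
    rw [div_mul_cancel₀ _ hr.ne', sub_zero]
    linarith [norm_le_norm_add_norm_sub' w w₀, mem_ball_iff_norm.1 hw]
  simpa using add_smul_mem_feasibleSet hμ h0 (by positivity) hrA hw'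

end Feasibility

/-- Continuity of the lifting map: if `Δ(w)` is the unique minimizer of the strictly
convex coercive `F(n) = (1/(α+1)) Σ_i ν_i κ_i μ_i^{α-1} (n_i/ν_i)^{α+1}` over
`S(w) = {n ∈ ℝ_+^I : AM⁻¹n ≥ w}`, then `Δ` is continuous on `ℝ_+^J`. -/
theorem stmt19 {I J : ℕ} (α : ℝ) (hα : 0 < α)
    (ν μ κ : Fin I → ℝ) (hν : ∀ i, 0 < ν i) (hμ : ∀ i, 0 < μ i) (hκ : ∀ i, 0 < κ i)
    (A : Matrix (Fin J) (Fin I) ℝ)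
    (hA0 : ∀ j i, 0 ≤ A j i) (hArank : A.rank = J)
    (F : (Fin I → ℝ) → ℝ)
    (hF : ∀ n, F n = (1 / (α + 1)) * ∑ i, ν i * κ i * μ i ^ (α - 1) * (n i / ν i) ^ (α + 1))
    (Δ : (Fin J → ℝ) → (Fin I → ℝ))
    (hΔ : ∀ w : Fin J → ℝ, (∀ j, 0 ≤ w j) →
      ((∀ i, 0 ≤ Δ w i) ∧ ∀ j, w j ≤ ∑ i, A j i * Δ w i / μ i) ∧
      ∀ m : Fin I → ℝ, ((∀ i, 0 ≤ m i) ∧ ∀ j, w j ≤ ∑ i, A j i * m i / μ i) →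
        m ≠ Δ w → F (Δ w) < F m) :
    ContinuousOn Δ {w | ∀ j, 0 ≤ w j} := by
  set s : Set (Fin J → ℝ) := {w | ∀ j, 0 ≤ w j}
  have hFc : Continuous F := by
    rw [funext hF]
    fun_prop (disch := linarith)
  have hmin : ∀ w ∈ s, Δ w ∈ feasibleSet A μ w ∧ IsMinOn F (feasibleSet A μ w) (Δ w) :=
    fun w hw => ⟨(hΔ w hw).1, isMinOn_iff.2 fun m hm => by
      rcases eq_or_ne m (Δ w) with rfl | hne
      exacts [le_rfl, ((hΔ w hw).2 m hm hne).le]⟩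
  obtain ⟨r, hr, hrA⟩ := exists_pos_forall_le_of_pos
    (Matrix.sum_row_pos_of_rank_eq_card hA0 (by rwa [Fintype.card_fin]))
  intro w₀ hw₀
  set g : (Fin J → ℝ) → Fin I → ℝ := fun w => Δ w₀ + (‖w - w₀‖ / r) • μ
  have hg : Tendsto g (𝓝[s] w₀) (𝓝 (Δ w₀)) := by
    have : Continuous g := by fun_prop
    simpa [g] using (this.tendsto w₀).mono_left (nhdsWithin_le_nhds (s := s))
  have hgS : ∀ w, g w ∈ feasibleSet A μ w := fun w =>
    add_smul_mem_feasibleSet hμ (hΔ w₀ hw₀).1 (by positivity) hrA (div_mul_cancel₀ _ hr.ne').ge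
  obtain ⟨K, hK, hFK⟩ := exists_isCompact_forall_sum_rpow_le (p := α + 1) (c := 1 / (α + 1))
    (by linarith) (fun i => mul_pos (mul_pos (hν i) (hκ i)) (Real.rpow_pos_of_pos (hμ i) _)) hν
    (by positivity) (F (((‖w₀‖ + 1) / r) • μ))
  have hΔK : ∀ᶠ w in 𝓝[s] w₀, Δ w ∈ K := by
    filter_upwards [self_mem_nhdsWithin,
      nhdsWithin_le_nhds (eventually_smul_mem_feasibleSet hμ hr hrA w₀)] with w hw hbig
    exact hFK _ (hΔ w hw).1.1 ((hF _).symm.trans_le (isMinOn_iff.1 (hmin w hw).2 _ hbig))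
  exact continuousWithinAt_of_unique_isMinOn hFc isClosed_setOf_mem_feasibleSet hmin
    (fun x hx hle => by_contra fun hne => ((hΔ w₀ hw₀).2 x hx hne).not_ge hle) hg
    (.of_forall hgS) hK hΔK
end
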